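/- (Per-dimension reachable set.) Fix a dimension i with a_minⁱ < a_prevⁱ < a_maxⁱ, and write R⁺ = min(δⁱ, a_maxⁱ − a_prevⁱ) > 0 and R⁻ = min(δⁱ, a_prevⁱ − a_minⁱ) > 0. Then the image of the per-dimension DD-SRad map g(v) = a_prevⁱ + R_eff^i(v)·f(v), as v ranges over ℝ, is exactly the open interval (a_prevⁱ − R⁻, a_prevⁱ + R⁺). -/

import Mathlib

/-- The squashing function `f(t) = t / √(1 + t²)`. -/
noncomputable def squash (t : ℝ) : ℝ := t / Real.sqrt (1 + t ^ 2)

/-- The per-dimension effective radius of DD-SRad. -/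
noncomputable def Reff (δ amin amax aprev u : ℝ) : ℝ :=
  if 0 < u then min δ (amax - aprev)
  else if u < 0 then min δ (aprev - amin)
  else δ

/-!
`squash` preserves signs and has the explicit inverse `y ↦ y / √(1 - y²)` on `(-1, 1)`, so it maps
the positive and negative half-lines onto `(0, 1)` and `(-1, 0)`. On each half-line the DD-SRad map
is the affine map `y ↦ aprev + R * y` (with the constant radius `R⁺` resp. `R⁻`) composed with
`squash`, hence sends it onto `(aprev, aprev + R⁺)` resp. `(aprev - R⁻, aprev)`; together with
`0 ↦ aprev` these glue to the claimed open interval.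
-/

open Set

lemma sqrt_one_add_sq_pos (t : ℝ) : 0 < Real.sqrt (1 + t ^ 2) :=
  Real.sqrt_pos.mpr (by positivity)

lemma abs_squash_lt_one (t : ℝ) : |squash t| < 1 := by
  rw [squash, abs_div, abs_of_pos (sqrt_one_add_sq_pos t), div_lt_one (sqrt_one_add_sq_pos t),
    ← Real.sqrt_sq_eq_abs]
  exact Real.sqrt_lt_sqrt (sq_nonneg t) (lt_one_add _)

lemma squash_div_sqrt_one_sub_sq {y : ℝ} (hy : |y| < 1) :
    squash (y / Real.sqrt (1 - y ^ 2)) = y := by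
  have hy2 : 0 < 1 - y ^ 2 := by nlinarith [abs_lt.mp hy]
  set s := Real.sqrt (1 - y ^ 2)
  have hs : 0 < s := Real.sqrt_pos.mpr hy2
  have hs2 : s ^ 2 = 1 - y ^ 2 := Real.sq_sqrt hy2.le
  have hden : 1 + (y / s) ^ 2 = (1 / s) ^ 2 := by
    field_simp
    linarith
  rw [squash, hden, Real.sqrt_sq (by positivity)]
  field_simp

lemma image_squash_Ioi : squash '' Ioi 0 = Ioo 0 1 := by
  ext y
  constructor
  · rintro ⟨t, ht, rfl⟩
    exact ⟨div_pos ht (sqrt_one_add_sq_pos t), (abs_lt.mp (abs_squash_lt_one t)).2⟩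
  · rintro ⟨hy₀, hy₁⟩
    have hy : |y| < 1 := abs_lt.mpr ⟨by linarith, hy₁⟩
    refine ⟨y / Real.sqrt (1 - y ^ 2), ?_, squash_div_sqrt_one_sub_sq hy⟩
    exact div_pos hy₀ (Real.sqrt_pos.mpr (by nlinarith))

lemma image_squash_Iio : squash '' Iio 0 = Ioo (-1) 0 := by
  ext y
  constructor
  · rintro ⟨t, ht, rfl⟩
    exact ⟨(abs_lt.mp (abs_squash_lt_one t)).1, div_neg_of_neg_of_pos ht (sqrt_one_add_sq_pos t)⟩
  · rintro ⟨hy₁, hy₀⟩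
    have hy : |y| < 1 := abs_lt.mpr ⟨hy₁, by linarith⟩
    refine ⟨y / Real.sqrt (1 - y ^ 2), ?_, squash_div_sqrt_one_sub_sq hy⟩
    exact div_neg_of_neg_of_pos hy₀ (Real.sqrt_pos.mpr (by nlinarith))

lemma image_add_mul_squash_Ioi {R : ℝ} (hR : 0 < R) (c : ℝ) :
    (fun v => c + R * squash v) '' Ioi 0 = Ioo c (c + R) := by
  have h := image_affine_Ioo hR c 0 1
  rw [← image_squash_Ioi, image_image] at h
  simpa [add_comm] using h

lemma image_add_mul_squash_Iio {R : ℝ} (hR : 0 < R) (c : ℝ) :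
    (fun v => c + R * squash v) '' Iio 0 = Ioo (c - R) c := by
  have h := image_affine_Ioo hR c (-1) 0
  rw [← image_squash_Iio, image_image] at h
  simpa [add_comm, sub_eq_add_neg] using h

section Reff

variable {δ amin amax aprev u : ℝ}

lemma Reff_of_pos (hu : 0 < u) : Reff δ amin amax aprev u = min δ (amax - aprev) := if_pos hu

lemma Reff_of_neg (hu : u < 0) : Reff δ amin amax aprev u = min δ (aprev - amin) := by
  rw [Reff, if_neg hu.not_gt, if_pos hu]

end Reff

/-- Per-dimension reachable set: for an interior previous action
`amin < aprev < amax`, the image of the per-dimension DD-SRad map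
`g(v) = aprev + Reff(v)·f(v)` over `v ∈ ℝ` is exactly the open interval
`(aprev − R⁻, aprev + R⁺)`, where `R⁺ = min(δ, amax − aprev)` and
`R⁻ = min(δ, aprev − amin)`. -/
theorem ddsrad_range (δ amin amax aprev : ℝ) (hδ : 0 < δ)
    (h₁ : amin < aprev) (h₂ : aprev < amax) :
    Set.range (fun v => aprev + Reff δ amin amax aprev v * squash v) =
      Set.Ioo (aprev - min δ (aprev - amin)) (aprev + min δ (amax - aprev)) := by
  have hRm : 0 < min δ (aprev - amin) := lt_min hδ (sub_pos.mpr h₁)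
  have hRp : 0 < min δ (amax - aprev) := lt_min hδ (sub_pos.mpr h₂)
  set g := fun v => aprev + Reff δ amin amax aprev v * squash v
  have hneg : g '' Iio 0 = Ioo (aprev - min δ (aprev - amin)) aprev := by
    rw [← image_add_mul_squash_Iio hRm]
    exact image_congr fun v hv => by simp only [g, Reff_of_neg (mem_Iio.mp hv)]
  have hpos : g '' Ioi 0 = Ioo aprev (aprev + min δ (amax - aprev)) := by
    rw [← image_add_mul_squash_Ioi hRp]
    exact image_congr fun v hv => by simp only [g, Reff_of_pos (mem_Ioi.mp hv)]
  have hzero : g 0 = aprev := by simp [g, squash]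
  rw [← image_univ, ← Iio_union_Ici, ← Ioi_insert, image_union, image_insert_eq, hneg, hpos, hzero,
    Ioo_insert_left (lt_add_of_pos_right _ hRp)]
  exact Ioo_union_Ico_eq_Ioo (sub_lt_self _ hRm) (le_add_of_nonneg_right hRp.le)
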